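/- Let λ, μ, c₀, α > 0 and define C₃, C₄ as C₃ = (c₀(λ+3μ)+α²)/(2(c₀(λ+2μ)+α²)), C₄ = (c₀(λ+μ)+α²)/(c₀(λ+3μ)+α²), C₁ = α/(c₀(λ+2μ)+α²). Then the constant d₀ := -((λ+μ)/μ)·(C₃/(2π))·(6C₄-1) - (C₃/(2π))·(4C₄-2) + αC₁/π is strictly negative. -/
import Mathlib


theorem d0_neg (lam μ c₀ α : ℝ) (hlam : 0 < lam) (hμ : 0 < μ)
    (hc₀ : 0 < c₀) (hα : 0 < α)
    (C₁ C₃ C₄ : ℝ)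
    (hC₁ : C₁ = α / (c₀ * (lam + 2 * μ) + α ^ 2))
    (hC₃ : C₃ = (c₀ * (lam + 3 * μ) + α ^ 2) / (2 * (c₀ * (lam + 2 * μ) + α ^ 2)))
    (hC₄ : C₄ = (c₀ * (lam + μ) + α ^ 2) / (c₀ * (lam + 3 * μ) + α ^ 2)) :
    -((lam + μ) / μ) * (C₃ / (2 * Real.pi)) * (6 * C₄ - 1)
      - (C₃ / (2 * Real.pi)) * (4 * C₄ - 2) + α * C₁ / Real.pi < 0 := by
  have hπ := Real.pi_pos
  have hA : 0 < c₀ * (lam + 2 * μ) + α ^ 2 := by positivity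
  have hB : 0 < c₀ * (lam + 3 * μ) + α ^ 2 := by positivity
  subst hC₁ hC₃ hC₄
  have key : -((lam + μ) / μ) * ((c₀ * (lam + 3 * μ) + α ^ 2) / (2 * (c₀ * (lam + 2 * μ) + α ^ 2)) / (2 * Real.pi)) *
          (6 * ((c₀ * (lam + μ) + α ^ 2) / (c₀ * (lam + 3 * μ) + α ^ 2)) - 1) -
        (c₀ * (lam + 3 * μ) + α ^ 2) / (2 * (c₀ * (lam + 2 * μ) + α ^ 2)) / (2 * Real.pi) *
          (4 * ((c₀ * (lam + μ) + α ^ 2) / (c₀ * (lam + 3 * μ) + α ^ 2)) - 2) +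
      α * (α / (c₀ * (lam + 2 * μ) + α ^ 2)) / Real.pi
      = (-(c₀ * (5 * lam ^ 2 + 10 * lam * μ + μ ^ 2)) - α ^ 2 * (5 * lam + 3 * μ)) /
          (4 * Real.pi * (c₀ * (lam + 2 * μ) + α ^ 2) * μ) := by
    field_simp
    ring
  rw [key]
  apply div_neg_of_neg_of_pos
  · nlinarith [sq_nonneg lam, sq_nonneg μ, mul_pos hlam hμ]
  · positivity
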